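/- arXiv:1103.0991 — 5 statements merged into one kernel-verified Lean document; each statement's English description precedes it below -/
import Mathlib

section
/- Let X be a real Hilbert space, let A : X ⇉ X be a maximally monotone operator, let (x,u) ∈ X × X, and let C and D be closed affine subspaces of X such that D − D = (C − C)^⊥. Let (x_n, u_n)_{n∈ℕ} be a sequence in the graph of A such that (x_n, u_n) converges weakly to (x,u) and (x_n, u_n) − P_{C×D}(x_n, u_n) → 0 in norm. Then (x,u) ∈ (C × D) ∩ gra A and ⟨x_n, u_n⟩ → ⟨x, u⟩. -/
/-!
Write `xₙ = pₙ + aₙ` and `uₙ = qₙ + bₙ` with `pₙ = P_C xₙ`, `qₙ = P_D uₙ` and `aₙ, bₙ → 0`.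
The projected sequences still converge weakly, so `x ∈ C` and `u ∈ D` (closed affine subspaces are
weakly sequentially closed), and then `pₙ - x ⊥ qₙ - u` because `D - D = (C - C)ᗮ`. Hence
`⟪xₙ - x, uₙ - u⟫ = ⟪aₙ, uₙ - u⟫ + ⟪pₙ - x, bₙ⟫` is a sum of products of a null and a bounded
sequence, so `⟪xₙ, uₙ⟫ → ⟪x, u⟫`. Passing to the limit in `0 ≤ ⟪xₙ - y, uₙ - v⟫` for `(y, v) ∈ A`
shows that `(x, u)` is monotonically related to `A`, and maximality puts it in `A`.
-/

open Filter Topology RealInnerProductSpace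

/-- A subset of `X × X`, viewed as the graph of a set-valued operator, is monotone. -/
def MonotoneGraph {X : Type*} [NormedAddCommGroup X] [InnerProductSpace ℝ X]
    (A : Set (X × X)) : Prop :=
  ∀ p ∈ A, ∀ q ∈ A, (0 : ℝ) ≤ ⟪p.1 - q.1, p.2 - q.2⟫

/-- A monotone graph is maximally monotone if it is not properly contained in the graph of
another monotone operator. -/
def MaximalMonotoneGraph {X : Type*} [NormedAddCommGroup X] [InnerProductSpace ℝ X]
    (A : Set (X × X)) : Prop :=
  MonotoneGraph A ∧ ∀ B : Set (X × X), MonotoneGraph B → A ⊆ B → B = A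

theorem MaximalMonotoneGraph.mem_of_forall_inner_nonneg {X : Type*} [NormedAddCommGroup X]
    [InnerProductSpace ℝ X] {A : Set (X × X)} (hA : MaximalMonotoneGraph A) {x u : X}
    (h : ∀ p ∈ A, 0 ≤ ⟪x - p.1, u - p.2⟫) : (x, u) ∈ A := by
  have hmono : MonotoneGraph (insert (x, u) A) := by
    rintro p (rfl | hp) q (rfl | hq)
    · simp
    · exact h q hq
    · simpa only [← neg_sub x, ← neg_sub u, inner_neg_neg] using h p hp
    · exact hA.1 p hp q hq
  rw [← hA.2 _ hmono (Set.subset_insert _ _)]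
  exact Set.mem_insert _ _

theorem tendsto_inner_zero_of_tendsto_zero_of_norm_le {X ι : Type*} [NormedAddCommGroup X]
    [InnerProductSpace ℝ X] {l : Filter ι} {a b : ι → X} {M : ℝ} (ha : Tendsto a l (𝓝 0))
    (hb : ∀ i, ‖b i‖ ≤ M) : Tendsto (fun i => ⟪a i, b i⟫) l (𝓝 0) := by
  refine squeeze_zero_norm (fun i => (norm_inner_le_norm _ _).trans
    (mul_le_mul_of_nonneg_left (hb i) (norm_nonneg _))) ?_
  simpa using (tendsto_norm_zero.comp ha).mul_const M

section WeakConvergence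

variable {X : Type*} [NormedAddCommGroup X] [InnerProductSpace ℝ X]

def WeakTendsto (z : ℕ → X) (x : X) : Prop :=
  ∀ w : X, Tendsto (fun n => ⟪z n, w⟫) atTop (𝓝 ⟪x, w⟫)

namespace WeakTendsto

variable {z y : ℕ → X} {x u : X}

theorem sub_const (h : WeakTendsto z x) (c : X) : WeakTendsto (fun n => z n - c) (x - c) :=
  fun w => by simpa only [inner_sub_left] using (h w).sub_const ⟪c, w⟫

theorem of_tendsto_sub (h : WeakTendsto z x) (hzy : Tendsto (fun n => z n - y n) atTop (𝓝 0)) :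
    WeakTendsto y x := fun w => by
  have hnull : Tendsto (fun n => ⟪z n - y n, w⟫) atTop (𝓝 0) := by
    simpa using hzy.inner (tendsto_const_nhds (x := w))
  simpa only [inner_sub_left, sub_sub_cancel, sub_zero] using (h w).sub hnull

theorem exists_norm_le [CompleteSpace X] (h : WeakTendsto z x) : ∃ M, ∀ n, ‖z n‖ ≤ M := by
  have hpointwise : ∀ w, ∃ C, ∀ n, ‖innerSL ℝ (z n) w‖ ≤ C := fun w => by
    obtain ⟨C, hC⟩ := (h w).norm.bddAbove_range
    exact ⟨C, fun n => hC (Set.mem_range_self n)⟩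
  obtain ⟨M, hM⟩ := banach_steinhaus hpointwise
  exact ⟨M, fun n => by simpa only [innerSL_apply_norm] using hM n⟩

theorem tendsto_inner_sub_sub_iff (hz : WeakTendsto z x) (hy : WeakTendsto y u) (a b : X) :
    Tendsto (fun n => ⟪z n - a, y n - b⟫) atTop (𝓝 ⟪x - a, u - b⟫) ↔
      Tendsto (fun n => ⟪z n, y n⟫) atTop (𝓝 ⟪x, u⟫) := by
  have expand : ∀ v w : X, ⟪v - a, w - b⟫ = ⟪v, w⟫ - (⟪v, b⟫ + ⟪w, a⟫ - ⟪a, b⟫) := fun v w => by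
    simp only [inner_sub_left, inner_sub_right, real_inner_comm a w]
    ring
  have hcross : Tendsto (fun n => ⟪z n, b⟫ + ⟪y n, a⟫ - ⟪a, b⟫) atTop
      (𝓝 (⟪x, b⟫ + ⟪u, a⟫ - ⟪a, b⟫)) := ((hz b).add (hy a)).sub_const _
  simp only [expand]
  constructor
  · intro h
    simpa using h.add hcross
  · intro h
    exact h.sub hcross

end WeakTendsto

theorem Submodule.mem_of_weakTendsto [CompleteSpace X] {K : Submodule ℝ X}
    (hK : IsClosed (K : Set X)) {z : ℕ → X} {x : X} (hz : ∀ n, z n ∈ K) (h : WeakTendsto z x) :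
    x ∈ K := by
  rw [← hK.submodule_topologicalClosure_eq, ← K.orthogonal_orthogonal_eq_closure]
  intro w hw
  have hzero : ∀ n, ⟪w, z n⟫ = 0 := fun n => Submodule.inner_left_of_mem_orthogonal (hz n) hw
  rw [real_inner_comm]
  exact tendsto_nhds_unique (h w) (by simpa only [real_inner_comm, hzero] using tendsto_const_nhds)

theorem AffineSubspace.mem_of_weakTendsto [CompleteSpace X] {S : AffineSubspace ℝ X}
    (hS : IsClosed (S : Set X)) {z : ℕ → X} {x : X} (hz : ∀ n, z n ∈ S) (h : WeakTendsto z x) :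
    x ∈ S := by
  have hdir : x - z 0 ∈ S.direction :=
    Submodule.mem_of_weakTendsto ((S.isClosed_direction_iff).2 hS)
      (fun n => S.vsub_mem_direction (hz n) (hz 0)) (h.sub_const (z 0))
  exact (S.vsub_right_mem_direction_iff_mem (hz 0) x).1 hdir

theorem tendsto_inner_sub_sub_zero_of_orthogonal [CompleteSpace X] {z y p q : ℕ → X} {x u : X}
    (hz : WeakTendsto z x) (hy : WeakTendsto y u)
    (hzp : Tendsto (fun n => z n - p n) atTop (𝓝 0))
    (hyq : Tendsto (fun n => y n - q n) atTop (𝓝 0))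
    (horth : ∀ n, ⟪p n - x, q n - u⟫ = 0) :
    Tendsto (fun n => ⟪z n - x, y n - u⟫) atTop (𝓝 0) := by
  obtain ⟨My, hMy⟩ := (hy.sub_const u).exists_norm_le
  obtain ⟨Mp, hMp⟩ := ((hz.of_tendsto_sub hzp).sub_const x).exists_norm_le
  have hdecomp : ∀ n, ⟪z n - x, y n - u⟫ =
      ⟪z n - p n, y n - u⟫ + ⟪y n - q n, p n - x⟫ + ⟪p n - x, q n - u⟫ := fun n => by
    simp only [inner_sub_left, inner_sub_right, real_inner_comm (y n), real_inner_comm (q n)]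
    ring
  simp only [hdecomp, horth, add_zero]
  simpa using (tendsto_inner_zero_of_tendsto_zero_of_norm_le hzp hMy).add
    (tendsto_inner_zero_of_tendsto_zero_of_norm_le hyq hMp)

end WeakConvergence

theorem demiclosedness_via_two_affine_subspaces_general
    {X : Type*} [NormedAddCommGroup X] [InnerProductSpace ℝ X] [CompleteSpace X]
    (A : Set (X × X)) (hA : MaximalMonotoneGraph A)
    (x u : X) (C D : AffineSubspace ℝ X)
    (hCcl : IsClosed (C : Set X)) (hDcl : IsClosed (D : Set X))
    (hdir : D.direction = C.directionᗮ)
    (PC PD : X → X)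
    (hPC : ∀ w : X, PC w ∈ C ∧ ∀ v ∈ C, ‖w - PC w‖ ≤ ‖w - v‖)
    (hPD : ∀ w : X, PD w ∈ D ∧ ∀ v ∈ D, ‖w - PD w‖ ≤ ‖w - v‖)
    (xn un : ℕ → X) (hgra : ∀ n, (xn n, un n) ∈ A)
    (hxweak : ∀ w : X, Tendsto (fun n => ⟪xn n, w⟫) atTop (𝓝 ⟪x, w⟫))
    (huweak : ∀ w : X, Tendsto (fun n => ⟪un n, w⟫) atTop (𝓝 ⟪u, w⟫))
    (hproj : Tendsto (fun n => (xn n - PC (xn n), un n - PD (un n))) atTop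
      (𝓝 ((0 : X), (0 : X)))) :
    x ∈ C ∧ u ∈ D ∧ (x, u) ∈ A ∧
      Tendsto (fun n => ⟪xn n, un n⟫) atTop (𝓝 ⟪x, u⟫) := by
  have hxn : WeakTendsto xn x := hxweak
  have hun : WeakTendsto un u := huweak
  obtain ⟨hxPC, huPD⟩ := Prod.tendsto_iff _ _ |>.1 hproj
  have hx : x ∈ C := C.mem_of_weakTendsto hCcl (fun n => (hPC (xn n)).1) (hxn.of_tendsto_sub hxPC)
  have hu : u ∈ D := D.mem_of_weakTendsto hDcl (fun n => (hPD (un n)).1) (hun.of_tendsto_sub huPD)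
  have horth : ∀ n, ⟪PC (xn n) - x, PD (un n) - u⟫ = 0 := fun n =>
    Submodule.inner_right_of_mem_orthogonal (C.vsub_mem_direction (hPC (xn n)).1 hx)
      (hdir ▸ D.vsub_mem_direction (hPD (un n)).1 hu)
  have hlim : Tendsto (fun n => ⟪xn n, un n⟫) atTop (𝓝 ⟪x, u⟫) := by
    rw [← hxn.tendsto_inner_sub_sub_iff hun x u]
    simpa using tendsto_inner_sub_sub_zero_of_orthogonal hxn hun hxPC huPD horth
  refine ⟨hx, hu, hA.mem_of_forall_inner_nonneg fun p hp => ?_, hlim⟩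
  exact ge_of_tendsto' ((hxn.tendsto_inner_sub_sub_iff hun p.1 p.2).2 hlim)
    fun n => hA.1 _ (hgra n) p hp

theorem demiclosedness_via_two_affine_subspaces
    {X : Type*} [NormedAddCommGroup X] [InnerProductSpace ℝ X] [CompleteSpace X]
    (A : Set (X × X)) (hA : MaximalMonotoneGraph A)
    (x u : X) (C D : AffineSubspace ℝ X)
    (hCne : (C : Set X).Nonempty) (hDne : (D : Set X).Nonempty)
    (hCcl : IsClosed (C : Set X)) (hDcl : IsClosed (D : Set X))
    (hdir : D.direction = C.directionᗮ)
    (PC PD : X → X)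
    (hPC : ∀ w : X, PC w ∈ C ∧ ∀ v ∈ C, ‖w - PC w‖ ≤ ‖w - v‖)
    (hPD : ∀ w : X, PD w ∈ D ∧ ∀ v ∈ D, ‖w - PD w‖ ≤ ‖w - v‖)
    (xn un : ℕ → X) (hgra : ∀ n, (xn n, un n) ∈ A)
    (hxweak : ∀ w : X, Tendsto (fun n => ⟪xn n, w⟫) atTop (𝓝 ⟪x, w⟫))
    (huweak : ∀ w : X, Tendsto (fun n => ⟪un n, w⟫) atTop (𝓝 ⟪u, w⟫))
    (hproj : Tendsto (fun n => (xn n - PC (xn n), un n - PD (un n))) atTop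
      (𝓝 ((0 : X), (0 : X)))) :
    x ∈ C ∧ u ∈ D ∧ (x, u) ∈ A ∧
      Tendsto (fun n => ⟪xn n, un n⟫) atTop (𝓝 ⟪x, u⟫) :=
  demiclosedness_via_two_affine_subspaces_general A hA x u C D hCcl hDcl hdir PC PD hPC hPD xn un
    hgra hxweak huweak hproj
end

section
/- Let X be a real Hilbert space, let V be a closed linear subspace of X, let x, u ∈ X, and set C = x + V and D = u + V^⊥. Let (x_n)_{n∈ℕ} and (u_n)_{n∈ℕ} be sequences in X with x_n ⇀ x, u_n ⇀ u, x_n − P_C x_n → 0, and u_n − P_D u_n → 0. Then ⟨x_n, u_n⟩ → ⟨x, u⟩. -/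
/-!
Write `xₙ - x = aₙ + eₙ` and `uₙ - u = bₙ + fₙ` with `aₙ = P_C xₙ - x ∈ V`, `bₙ = P_D uₙ - u ∈ Vᗮ`
and `eₙ, fₙ → 0`. Since `⟪aₙ, bₙ⟫ = 0`, `⟪xₙ - x, uₙ - u⟫` is a combination of inner products of
a bounded sequence with a null one (weakly convergent sequences are bounded by Banach–Steinhaus),
so it tends to `0`; the remaining terms of `⟪xₙ, uₙ⟫` expanded around `(x, u)` converge by weak
convergence.
-/

open Filter Topology RealInnerProductSpace Pointwise

theorem Set.mem_singleton_add_iff_sub_mem {X S : Type*} [AddCommGroup X] [SetLike S X]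
    [AddSubgroupClass S X] {V : S} {x y : X} : y ∈ {x} + (V : Set X) ↔ y - x ∈ V := by
  rw [Set.singleton_add]
  constructor
  · rintro ⟨v, hv, rfl⟩
    simpa using hv
  · exact fun h => ⟨y - x, h, add_sub_cancel x y⟩

section InnerProductSpace

variable {𝕜 X : Type*} [RCLike 𝕜] [NormedAddCommGroup X] [InnerProductSpace 𝕜 X]

theorem exists_norm_le_of_forall_exists_norm_inner_le [CompleteSpace X] {ι : Type*} {z : ι → X}
    (h : ∀ w : X, ∃ C, ∀ i, ‖inner 𝕜 (z i) w‖ ≤ C) : ∃ C, ∀ i, ‖z i‖ ≤ C := by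
  obtain ⟨C, hC⟩ := banach_steinhaus (g := fun i => innerSL 𝕜 (z i)) h
  exact ⟨C, fun i => by simpa only [innerSL_apply_norm] using hC i⟩

theorem isBoundedUnder_norm_sub_of_forall_tendsto_inner [CompleteSpace X] {z : X} {zn : ℕ → X}
    (h : ∀ w : X, Tendsto (fun n => inner 𝕜 (zn n) w) atTop (𝓝 (inner 𝕜 z w))) :
    IsBoundedUnder (· ≤ ·) atTop (fun n => ‖zn n - z‖) := by
  refine isBoundedUnder_of (exists_norm_le_of_forall_exists_norm_inner_le (𝕜 := 𝕜) fun w => ?_)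
  obtain ⟨C, hC⟩ := ((h w).sub_const (inner 𝕜 z w)).norm.bddAbove_range
  exact ⟨C, fun n => by simpa only [inner_sub_left] using hC ⟨n, rfl⟩⟩

variable {ι : Type*} {l : Filter ι}

theorem tendsto_inner_zero_of_isBoundedUnder_of_tendsto_zero {a b : ι → X}
    (ha : IsBoundedUnder (· ≤ ·) l (fun i => ‖a i‖)) (hb : Tendsto b l (𝓝 0)) :
    Tendsto (fun i => inner 𝕜 (a i) (b i)) l (𝓝 0) :=
  squeeze_zero_norm (fun i => norm_inner_le_norm (a i) (b i)) <|
    isBoundedUnder_le_mul_tendsto_zero (by simpa [Function.comp_def] using ha)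
      (tendsto_zero_iff_norm_tendsto_zero.mp hb)

theorem tendsto_inner_zero_of_tendsto_zero_of_isBoundedUnder {a b : ι → X}
    (ha : Tendsto a l (𝓝 0)) (hb : IsBoundedUnder (· ≤ ·) l (fun i => ‖b i‖)) :
    Tendsto (fun i => inner 𝕜 (a i) (b i)) l (𝓝 0) :=
  squeeze_zero_norm (fun i => norm_inner_le_norm (a i) (b i)) <|
    (tendsto_zero_iff_norm_tendsto_zero.mp ha).zero_mul_isBoundedUnder_le
      (by simpa [Function.comp_def] using hb)

theorem tendsto_inner_zero_of_sub_mem_of_sub_mem_orthogonal (V : Submodule 𝕜 X) {s t e f : ι → X}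
    (hs : IsBoundedUnder (· ≤ ·) l (fun i => ‖s i‖))
    (ht : IsBoundedUnder (· ≤ ·) l (fun i => ‖t i‖))
    (he : Tendsto e l (𝓝 0)) (hf : Tendsto f l (𝓝 0))
    (hse : ∀ i, s i - e i ∈ V) (htf : ∀ i, t i - f i ∈ Vᗮ) :
    Tendsto (fun i => inner 𝕜 (s i) (t i)) l (𝓝 0) := by
  have decomp : ∀ i, inner 𝕜 (s i) (t i)
      = inner 𝕜 (s i) (f i) + inner 𝕜 (e i) (t i) - inner 𝕜 (e i) (f i) := by
    intro i
    have horth : inner 𝕜 (s i - e i) (t i - f i) = 0 :=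
      (Submodule.mem_orthogonal V _).mp (htf i) _ (hse i)
    simp only [inner_sub_left, inner_sub_right] at horth
    linear_combination horth
  simp only [decomp]
  simpa using ((tendsto_inner_zero_of_isBoundedUnder_of_tendsto_zero (𝕜 := 𝕜) hs hf).add
    (tendsto_inner_zero_of_tendsto_zero_of_isBoundedUnder (𝕜 := 𝕜) he ht)).sub
      (he.inner (𝕜 := 𝕜) hf)

end InnerProductSpace

theorem tendsto_inner_of_tendsto_inner_sub_sub {X : Type*} [NormedAddCommGroup X]
    [InnerProductSpace ℝ X] {x u : X} {xn un : ℕ → X}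
    (hxweak : ∀ w : X, Tendsto (fun n => ⟪xn n, w⟫) atTop (𝓝 ⟪x, w⟫))
    (huweak : ∀ w : X, Tendsto (fun n => ⟪un n, w⟫) atTop (𝓝 ⟪u, w⟫))
    (h : Tendsto (fun n => ⟪xn n - x, un n - u⟫) atTop (𝓝 0)) :
    Tendsto (fun n => ⟪xn n, un n⟫) atTop (𝓝 ⟪x, u⟫) := by
  have expand : ∀ n, ⟪xn n, un n⟫ = ⟪xn n - x, un n - u⟫ + ⟪xn n, u⟫ + ⟪un n, x⟫ - ⟪x, u⟫ := by
    intro n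
    simp only [inner_sub_left, inner_sub_right, real_inner_comm x (un n)]
    ring
  simp only [expand]
  simpa [real_inner_comm] using ((h.add (hxweak u)).add (huweak x)).sub_const ⟪x, u⟫

theorem inner_tendsto_of_weak_convergence_and_orthogonal_affine_asymptotics_general
    {X : Type*} [NormedAddCommGroup X] [InnerProductSpace ℝ X] [CompleteSpace X]
    (V : Submodule ℝ X)
    (x u : X) (C D : Set X)
    (hC : C = {x} + (V : Set X)) (hD : D = {u} + (Vᗮ : Set X))
    (PC PD : X → X)
    (hPC : ∀ w : X, PC w ∈ C ∧ ∀ v ∈ C, ‖w - PC w‖ ≤ ‖w - v‖)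
    (hPD : ∀ w : X, PD w ∈ D ∧ ∀ v ∈ D, ‖w - PD w‖ ≤ ‖w - v‖)
    (xn un : ℕ → X)
    (hxweak : ∀ w : X, Tendsto (fun n => ⟪xn n, w⟫) atTop (𝓝 ⟪x, w⟫))
    (huweak : ∀ w : X, Tendsto (fun n => ⟪un n, w⟫) atTop (𝓝 ⟪u, w⟫))
    (hxproj : Tendsto (fun n => xn n - PC (xn n)) atTop (𝓝 0))
    (huproj : Tendsto (fun n => un n - PD (un n)) atTop (𝓝 0)) :
    Tendsto (fun n => ⟪xn n, un n⟫) atTop (𝓝 ⟪x, u⟫) := by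
  have hxV : ∀ n, xn n - x - (xn n - PC (xn n)) ∈ V := fun n => by
    rw [sub_sub_sub_cancel_left, ← Set.mem_singleton_add_iff_sub_mem, ← hC]
    exact (hPC (xn n)).1
  have huV : ∀ n, un n - u - (un n - PD (un n)) ∈ Vᗮ := fun n => by
    rw [sub_sub_sub_cancel_left, ← Set.mem_singleton_add_iff_sub_mem, ← hD]
    exact (hPD (un n)).1
  exact tendsto_inner_of_tendsto_inner_sub_sub hxweak huweak <|
    tendsto_inner_zero_of_sub_mem_of_sub_mem_orthogonal V
      (isBoundedUnder_norm_sub_of_forall_tendsto_inner hxweak)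
      (isBoundedUnder_norm_sub_of_forall_tendsto_inner huweak) hxproj huproj hxV huV

theorem inner_tendsto_of_weak_convergence_and_orthogonal_affine_asymptotics
    {X : Type*} [NormedAddCommGroup X] [InnerProductSpace ℝ X] [CompleteSpace X]
    (V : Submodule ℝ X) (hV : IsClosed (V : Set X))
    (x u : X) (C D : Set X)
    (hC : C = {x} + (V : Set X)) (hD : D = {u} + (Vᗮ : Set X))
    (PC PD : X → X)
    (hPC : ∀ w : X, PC w ∈ C ∧ ∀ v ∈ C, ‖w - PC w‖ ≤ ‖w - v‖)
    (hPD : ∀ w : X, PD w ∈ D ∧ ∀ v ∈ D, ‖w - PD w‖ ≤ ‖w - v‖)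
    (xn un : ℕ → X)
    (hxweak : ∀ w : X, Tendsto (fun n => ⟪xn n, w⟫) atTop (𝓝 ⟪x, w⟫))
    (huweak : ∀ w : X, Tendsto (fun n => ⟪un n, w⟫) atTop (𝓝 ⟪u, w⟫))
    (hxproj : Tendsto (fun n => xn n - PC (xn n)) atTop (𝓝 0))
    (huproj : Tendsto (fun n => un n - PD (un n)) atTop (𝓝 0)) :
    Tendsto (fun n => ⟪xn n, un n⟫) atTop (𝓝 ⟪x, u⟫) :=
  inner_tendsto_of_weak_convergence_and_orthogonal_affine_asymptotics_general V x u C D hC hD PC PD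
    hPC hPD xn un hxweak huweak hxproj huproj
end

section
/- (Classical demiclosedness principle.) Let X be a real Hilbert space, let S be a nonempty closed convex subset of X, let T : S → X be nonexpansive, let (z_n)_{n∈ℕ} be a sequence in S converging weakly to z, and suppose that z_n − T z_n converges in norm to x. Then z − T z = x. -/
/-! Write `r n = zn n - T (zn n)` and `d = z - T z`. Nonexpansiveness at the pair `(zn n, z)`,
with `T (zn n) - T z = (zn n - z) + (d - r n)`, expands to
`2 ⟪zn n - z, d - r n⟫ + ‖d - r n‖² ≤ 0`. The inner product pairs a weakly null sequence with a
norm convergent one, so it tends to `0` (weakly convergent sequences are bounded by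
Banach–Steinhaus), and in the limit `‖d - x‖² ≤ 0`. That `z ∈ S` at all is Mazur's theorem: a
closed convex set is weakly closed. -/

open Filter Topology RealInnerProductSpace

section

variable {X : Type*} [NormedAddCommGroup X] [InnerProductSpace ℝ X]

theorem two_inner_add_norm_sq_nonpos_of_norm_sub_le {T : X → X} {a b : X}
    (h : ‖T a - T b‖ ≤ ‖a - b‖) :
    2 * ⟪a - b, (b - T b) - (a - T a)⟫ + ‖(b - T b) - (a - T a)‖ ^ 2 ≤ 0 := by
  have hsq := pow_le_pow_left₀ (norm_nonneg _) h 2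
  rw [show T a - T b = (a - b) + ((b - T b) - (a - T a)) by abel, norm_add_sq_real] at hsq
  linarith

variable [CompleteSpace X]

theorem mem_of_tendsto_inner_of_isClosed_of_convex {ι : Type*} {l : Filter ι} [l.NeBot]
    {S : Set X} (hScl : IsClosed S) (hSconv : Convex ℝ S) {u : ι → X} {z : X}
    (hu : ∀ᶠ i in l, u i ∈ S)
    (hweak : ∀ w, Tendsto (fun i => ⟪u i, w⟫) l (𝓝 ⟪z, w⟫)) :
    z ∈ S := by
  by_contra hzS
  obtain ⟨f, c, hfS, hcz⟩ := geometric_hahn_banach_closed_point hSconv hScl hzS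
  have hf : ∀ y, ⟪y, (InnerProductSpace.toDual ℝ X).symm f⟫ = f y := fun y => by
    rw [real_inner_comm, InnerProductSpace.toDual_symm_apply]
  have hlim := hweak ((InnerProductSpace.toDual ℝ X).symm f)
  simp only [hf] at hlim
  exact hcz.not_ge (le_of_tendsto hlim (hu.mono fun i hi => (hfS _ hi).le))

theorem exists_norm_le_of_bddAbove_abs_inner {ι : Type*} {u : ι → X}
    (h : ∀ w, BddAbove (Set.range fun i => |⟪u i, w⟫|)) : ∃ C, ∀ i, ‖u i‖ ≤ C := by
  obtain ⟨C, hC⟩ := banach_steinhaus (g := fun i => InnerProductSpace.toDual ℝ X (u i))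
    fun w => by
      simpa [InnerProductSpace.toDual_apply_apply, Real.norm_eq_abs, bddAbove_def] using h w
  exact ⟨C, fun i => by simpa using hC i⟩

theorem tendsto_inner_of_tendsto_inner_of_tendsto {u v : ℕ → X} {z y : X}
    (hu : ∀ w, Tendsto (fun n => ⟪u n, w⟫) atTop (𝓝 ⟪z, w⟫)) (hv : Tendsto v atTop (𝓝 y)) :
    Tendsto (fun n => ⟪u n, v n⟫) atTop (𝓝 ⟪z, y⟫) := by
  obtain ⟨C, hC⟩ :=
    exists_norm_le_of_bddAbove_abs_inner fun w => (hu w).abs.bddAbove_range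
  have hsmall : Tendsto (fun n => ⟪u n, v n - y⟫) atTop (𝓝 0) := by
    refine squeeze_zero_norm (fun n => ?_)
      (by simpa using (tendsto_sub_nhds_zero_iff.2 hv).norm.const_mul C)
    calc ‖⟪u n, v n - y⟫‖ ≤ ‖u n‖ * ‖v n - y‖ := norm_inner_le_norm _ _
      _ ≤ C * ‖v n - y‖ := by gcongr; exact hC n
  simpa [← inner_add_right] using (hu y).add hsmall

end

theorem classical_demiclosedness_principle_general
    {X : Type*} [NormedAddCommGroup X] [InnerProductSpace ℝ X] [CompleteSpace X]
    (S : Set X) (hScl : IsClosed S) (hSconv : Convex ℝ S)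
    (T : X → X)
    (hT : ∀ a ∈ S, ∀ b ∈ S, ‖T a - T b‖ ≤ ‖a - b‖)
    (z x : X) (zn : ℕ → X) (hznS : ∀ n, zn n ∈ S)
    (hzweak : ∀ w : X, Tendsto (fun n => ⟪zn n, w⟫) atTop (𝓝 ⟪z, w⟫))
    (hres : Tendsto (fun n => zn n - T (zn n)) atTop (𝓝 x)) :
    z ∈ S ∧ z - T z = x := by
  have hzS : z ∈ S :=
    mem_of_tendsto_inner_of_isClosed_of_convex hScl hSconv (.of_forall hznS) hzweak
  refine ⟨hzS, ?_⟩
  have hweak_null : ∀ w, Tendsto (fun n => ⟪zn n - z, w⟫) atTop (𝓝 ⟪z - z, w⟫) :=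
    fun w => by simpa only [inner_sub_left] using (hzweak w).sub tendsto_const_nhds
  have hgap : Tendsto (fun n => (z - T z) - (zn n - T (zn n))) atTop (𝓝 (z - T z - x)) :=
    tendsto_const_nhds.sub hres
  have hlim := ((tendsto_inner_of_tendsto_inner_of_tendsto hweak_null hgap).const_mul 2).add
    (hgap.norm.pow 2)
  have hnonpos : ‖z - T z - x‖ ^ 2 ≤ 0 := by
    simpa using le_of_tendsto' hlim fun n =>
      two_inner_add_norm_sq_nonpos_of_norm_sub_le (hT _ (hznS n) _ hzS)
  rwa [sq_nonpos_iff, norm_eq_zero, sub_eq_zero] at hnonpos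

theorem classical_demiclosedness_principle
    {X : Type*} [NormedAddCommGroup X] [InnerProductSpace ℝ X] [CompleteSpace X]
    (S : Set X) (hSne : S.Nonempty) (hScl : IsClosed S) (hSconv : Convex ℝ S)
    (T : X → X)
    (hT : ∀ a ∈ S, ∀ b ∈ S, ‖T a - T b‖ ≤ ‖a - b‖)
    (z x : X) (zn : ℕ → X) (hznS : ∀ n, zn n ∈ S)
    (hzweak : ∀ w : X, Tendsto (fun n => ⟪zn n, w⟫) atTop (𝓝 ⟪z, w⟫))
    (hres : Tendsto (fun n => zn n - T (zn n)) atTop (𝓝 x)) :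
    z ∈ S ∧ z - T z = x :=
  classical_demiclosedness_principle_general S hScl hSconv T hT z x zn hznS hzweak hres
end

section
/- (Multi-operator demiclosedness principle for firmly nonexpansive operators.) Let X be a real Hilbert space, let m ≥ 2 be an integer, let I = {1, …, m}, and let (F_i)_{i∈I} be a family of firmly nonexpansive operators on X. For each i ∈ I let (z_{i,n})_{n∈ℕ} be a sequence in X such that, for all i, j ∈ I: z_{i,n} ⇀ z_i and F_i z_{i,n} ⇀ x; the sum over i ∈ I of (z_{i,n} − F_i z_{i,n}) converges in norm to −m x + ∑_{i∈I} z_i; and F_i z_{i,n} − F_j z_{j,n} → 0 in norm. Then F_i z_i = x for every i ∈ I. -/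
/-!
Firm nonexpansiveness means `⟪F a - F b, (a - F a) - (b - F b)⟫ ≥ 0`. Apply it to `a = z_{i,n}`,
`b = z_i` and sum over `i`. The only terms pairing two weakly convergent sequences are
`⟪F_i z_{i,n}, z_{i,n} - F_i z_{i,n}⟫`; their sum still converges, because the `F_i z_{i,n}` are
asymptotically equal to each other and the `z_{i,n} - F_i z_{i,n}` sum to a norm convergent
sequence. In the limit this gives `0 ≤ -∑ i, ‖x - F_i z_i‖²`.
-/

open Filter Topology RealInnerProductSpace

section

variable {X : Type*} [NormedAddCommGroup X] [InnerProductSpace ℝ X]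

def WeaklyTendsto (u : ℕ → X) (a : X) : Prop :=
  ∀ w : X, Tendsto (fun n => ⟪u n, w⟫) atTop (𝓝 ⟪a, w⟫)

namespace WeaklyTendsto

variable {u v : ℕ → X} {a b : X}

theorem sub (hu : WeaklyTendsto u a) (hv : WeaklyTendsto v b) :
    WeaklyTendsto (fun n => u n - v n) (a - b) := fun w => by
  simpa only [inner_sub_left] using (hu w).sub (hv w)

theorem tendsto_inner_left (hu : WeaklyTendsto u a) (c : X) :
    Tendsto (fun n => ⟪c, u n⟫) atTop (𝓝 ⟪c, a⟫) := by
  simpa only [real_inner_comm c] using hu c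

theorem exists_norm_le [CompleteSpace X] (hu : WeaklyTendsto u a) : ∃ C, ∀ n, ‖u n‖ ≤ C := by
  have hpointwise : ∀ w : X, ∃ C, ∀ n, ‖innerSL ℝ (u n) w‖ ≤ C := fun w => by
    obtain ⟨C, hC⟩ := (hu w).abs.bddAbove_range
    exact ⟨C, fun n => by
      simpa only [innerSL_apply_apply, Real.norm_eq_abs] using hC ⟨n, rfl⟩⟩
  obtain ⟨C, hC⟩ := banach_steinhaus hpointwise
  exact ⟨C, fun n => by simpa only [innerSL_apply_norm] using hC n⟩

theorem tendsto_inner [CompleteSpace X] (hu : WeaklyTendsto u a)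
    (hv : Tendsto v atTop (𝓝 b)) :
    Tendsto (fun n => ⟪u n, v n⟫) atTop (𝓝 ⟪a, b⟫) := by
  obtain ⟨C, hC⟩ := hu.exists_norm_le
  have hdist : Tendsto (fun n => ⟪u n, v n - b⟫) atTop (𝓝 0) := by
    refine squeeze_zero_norm (fun n => ?_)
      (by simpa using (tendsto_iff_norm_sub_tendsto_zero.1 hv).const_mul C)
    calc ‖⟪u n, v n - b⟫‖ ≤ ‖u n‖ * ‖v n - b‖ := norm_inner_le_norm _ _
      _ ≤ C * ‖v n - b‖ := mul_le_mul_of_nonneg_right (hC n) (norm_nonneg _)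
  simpa only [inner_sub_right, sub_add_cancel, zero_add] using hdist.add (hu b)

end WeaklyTendsto

theorem inner_nonneg_of_firmlyNonexpansive {T : X → X} {a b : X}
    (hT : ‖T a - T b‖ ^ 2 + ‖(a - T a) - (b - T b)‖ ^ 2 ≤ ‖a - b‖ ^ 2) :
    0 ≤ ⟪T a - T b, (a - T a) - (b - T b)⟫ := by
  have hsplit : a - b = (T a - T b) + ((a - T a) - (b - T b)) := by abel
  rw [hsplit, norm_add_sq_real] at hT
  linarith

variable {ι : Type*} [Fintype ι]

theorem tendsto_sum_inner_of_tendsto_sub_nhds_zero [CompleteSpace X] (k : ι)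
    {y e : ι → ℕ → X} {x : X} {b : ι → X} (hy : WeaklyTendsto (y k) x)
    (he : ∀ i, WeaklyTendsto (e i) (b i))
    (hdiff : ∀ i, Tendsto (fun n => y i n - y k n) atTop (𝓝 0))
    (hsum : Tendsto (fun n => ∑ i, e i n) atTop (𝓝 (∑ i, b i))) :
    Tendsto (fun n => ∑ i, ⟪y i n, e i n⟫) atTop (𝓝 (∑ i, ⟪x, b i⟫)) := by
  have hsplit : ∀ n,
      ∑ i, ⟪y i n, e i n⟫ = ∑ i, ⟪e i n, y i n - y k n⟫ + ⟪y k n, ∑ i, e i n⟫ := by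
    intro n
    simp [inner_sum, inner_sub_right, real_inner_comm (e _ n)]
  have hdiff_pair : Tendsto (fun n => ∑ i, ⟪e i n, y i n - y k n⟫) atTop (𝓝 0) := by
    simpa using tendsto_finsetSum Finset.univ fun i _ => (he i).tendsto_inner (hdiff i)
  have hlim := hdiff_pair.add (hy.tendsto_inner hsum)
  rw [zero_add, inner_sum] at hlim
  exact hlim.congr fun n => (hsplit n).symm

theorem tendsto_sum_inner_sub_sub {u v : ι → ℕ → X} {a b c d : ι → X}
    (hu : ∀ i, WeaklyTendsto (u i) (a i)) (hv : ∀ i, WeaklyTendsto (v i) (b i))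
    (huv : Tendsto (fun n => ∑ i, ⟪u i n, v i n⟫) atTop (𝓝 (∑ i, ⟪a i, b i⟫))) :
    Tendsto (fun n => ∑ i, ⟪u i n - c i, v i n - d i⟫) atTop
      (𝓝 (∑ i, ⟪a i - c i, b i - d i⟫)) := by
  have hexpand : ∀ (s t : ι → X), ∑ i, ⟪s i - c i, t i - d i⟫
      = ∑ i, ⟪s i, t i⟫ - ∑ i, (⟪s i, d i⟫ + ⟪c i, t i⟫ - ⟪c i, d i⟫) := by
    intro s t
    rw [← Finset.sum_sub_distrib]
    refine Finset.sum_congr rfl fun i _ => ?_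
    simp only [inner_sub_left, inner_sub_right]
    ring
  have hrest := tendsto_finsetSum Finset.univ fun i _ =>
    ((hu i (d i)).add ((hv i).tendsto_inner_left (c i))).sub_const ⟪c i, d i⟫
  simpa only [hexpand] using huv.sub hrest

end

theorem multi_operator_demiclosedness_firmly_nonexpansive_general
    {X : Type*} [NormedAddCommGroup X] [InnerProductSpace ℝ X] [CompleteSpace X]
    (m : ℕ)
    (F : Fin m → X → X)
    (hF : ∀ i, ∀ a b : X,
      ‖F i a - F i b‖ ^ 2 + ‖(a - F i a) - (b - F i b)‖ ^ 2 ≤ ‖a - b‖ ^ 2)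
    (zn : Fin m → ℕ → X) (z : Fin m → X) (x : X)
    (hzweak : ∀ i, ∀ w : X, Tendsto (fun n => ⟪zn i n, w⟫) atTop (𝓝 ⟪z i, w⟫))
    (hFweak : ∀ i, ∀ w : X, Tendsto (fun n => ⟪F i (zn i n), w⟫) atTop (𝓝 ⟪x, w⟫))
    (hsum : Tendsto (fun n => ∑ i, (zn i n - F i (zn i n))) atTop
      (𝓝 (-((m : ℝ) • x) + ∑ i, z i)))
    (hdiff : ∀ i j, Tendsto (fun n => F i (zn i n) - F j (zn j n)) atTop (𝓝 0)) :
    ∀ i, F i (z i) = x := by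
  intro k
  have he : ∀ i, WeaklyTendsto (fun n => zn i n - F i (zn i n)) (z i - x) :=
    fun i => WeaklyTendsto.sub (hzweak i) (hFweak i)
  have hsum' :
      Tendsto (fun n => ∑ i, (zn i n - F i (zn i n))) atTop (𝓝 (∑ i, (z i - x))) := by
    convert hsum using 2
    simp [Finset.sum_sub_distrib, neg_add_eq_sub, Nat.cast_smul_eq_nsmul]
  have hlim := tendsto_sum_inner_sub_sub (c := fun i => F i (z i)) (d := fun i => z i - F i (z i))
    hFweak he (tendsto_sum_inner_of_tendsto_sub_nhds_zero k (hFweak k) he (hdiff · k) hsum')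
  have hnonneg := ge_of_tendsto' hlim fun n =>
    Finset.sum_nonneg fun i _ => inner_nonneg_of_firmlyNonexpansive (hF i (zn i n) (z i))
  have hsq : ∑ i, ‖x - F i (z i)‖ ^ 2 ≤ 0 := by
    have hpair : ∀ i, (z i - x) - (z i - F i (z i)) = -(x - F i (z i)) := fun i => by abel
    simpa only [hpair, inner_neg_right, real_inner_self_eq_norm_sq, Finset.sum_neg_distrib,
      neg_nonneg] using hnonneg
  have hk := (Finset.sum_eq_zero_iff_of_nonneg fun i _ => sq_nonneg ‖x - F i (z i)‖).1
    (le_antisymm hsq (by positivity)) k (Finset.mem_univ k)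
  simpa [sub_eq_zero, eq_comm] using hk

theorem multi_operator_demiclosedness_firmly_nonexpansive
    {X : Type*} [NormedAddCommGroup X] [InnerProductSpace ℝ X] [CompleteSpace X]
    (m : ℕ) (hm : 2 ≤ m)
    (F : Fin m → X → X)
    (hF : ∀ i, ∀ a b : X,
      ‖F i a - F i b‖ ^ 2 + ‖(a - F i a) - (b - F i b)‖ ^ 2 ≤ ‖a - b‖ ^ 2)
    (zn : Fin m → ℕ → X) (z : Fin m → X) (x : X)
    (hzweak : ∀ i, ∀ w : X, Tendsto (fun n => ⟪zn i n, w⟫) atTop (𝓝 ⟪z i, w⟫))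
    (hFweak : ∀ i, ∀ w : X, Tendsto (fun n => ⟪F i (zn i n), w⟫) atTop (𝓝 ⟪x, w⟫))
    (hsum : Tendsto (fun n => ∑ i, (zn i n - F i (zn i n))) atTop
      (𝓝 (-((m : ℝ) • x) + ∑ i, z i)))
    (hdiff : ∀ i j, Tendsto (fun n => F i (zn i n) - F j (zn j n)) atTop (𝓝 0)) :
    ∀ i, F i (z i) = x :=
  multi_operator_demiclosedness_firmly_nonexpansive_general m F hF zn z x hzweak hFweak hsum hdiff
end

section
/- (Multi-operator demiclosedness principle for nonexpansive operators.) Let X be a real Hilbert space, let m ≥ 2 be an integer, let I = {1, …, m}, and let (T_i)_{i∈I} be a family of nonexpansive operators on X. For each i ∈ I let (z_{i,n})_{n∈ℕ} be a sequence in X such that, for all i, j ∈ I: z_{i,n} ⇀ z_i and T_i z_{i,n} ⇀ y_i; the sum over i ∈ I of (z_{i,n} − T_i z_{i,n}) converges in norm to ∑_{i∈I} (z_i − y_i); and z_{i,n} − z_{j,n} + T_i z_{i,n} − T_j z_{j,n} → 0 in norm. Then T_i z_i = y_i for every i ∈ I. -/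
/-!
For nonexpansive `T`, pairing `(x - z) + (T x - T z)` with `(x - z) - (T x - T z)` gives
`‖x - z‖² - ‖T x - T z‖² ≥ 0`. Take `x = z_{i,n}`, `z = z_i` and sum over `i`. Each pairing is a
product of two weakly convergent sequences, so it need not converge on its own; but the first
factors differ by strongly convergent sequences and the second factors have a strongly convergent
sum, which makes the sum of the pairings converge to the sum of the pairings of the weak limits,
`-∑ ‖y_i - T_i z_i‖²`. Being a limit of nonnegative numbers, this forces every `T_i z_i = y_i`.
-/

open Filter Topology RealInnerProductSpace

section

variable {X : Type*} [NormedAddCommGroup X] [InnerProductSpace ℝ X]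

def TendstoWeakly (f : ℕ → X) (x : X) : Prop :=
  ∀ w : X, Tendsto (fun n => ⟪f n, w⟫) atTop (𝓝 ⟪x, w⟫)

theorem Filter.Tendsto.tendstoWeakly {f : ℕ → X} {x : X} (hf : Tendsto f atTop (𝓝 x)) :
    TendstoWeakly f x :=
  fun _ => hf.inner tendsto_const_nhds

namespace TendstoWeakly

variable {f g : ℕ → X} {x x' : X}

theorem add (hf : TendstoWeakly f x) (hg : TendstoWeakly g x') :
    TendstoWeakly (fun n => f n + g n) (x + x') := fun w => by
  simpa only [inner_add_left] using (hf w).add (hg w)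

theorem sub (hf : TendstoWeakly f x) (hg : TendstoWeakly g x') :
    TendstoWeakly (fun n => f n - g n) (x - x') := fun w => by
  simpa only [inner_sub_left] using (hf w).sub (hg w)

theorem unique (hx : TendstoWeakly f x) (hx' : TendstoWeakly f x') : x = x' :=
  ext_inner_right ℝ fun w => tendsto_nhds_unique (hx w) (hx' w)

theorem eq_of_tendsto_sub (hf : TendstoWeakly f x) (hg : TendstoWeakly g x')
    (h : Tendsto (fun n => f n - g n) atTop (𝓝 0)) : x = x' :=
  sub_eq_zero.mp ((hf.sub hg).unique h.tendstoWeakly)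

variable [CompleteSpace X]

/-- Uniform boundedness principle for the functionals `⟪f n, ·⟫`. -/
theorem isBoundedUnder_norm (hf : TendstoWeakly f x) :
    IsBoundedUnder (· ≤ ·) atTop (norm ∘ f) := by
  have hpointwise : ∀ w : X, ∃ C, ∀ n, ‖innerSL ℝ (f n) w‖ ≤ C := fun w => by
    obtain ⟨C, hC⟩ := (hf w).norm.bddAbove_range
    exact ⟨C, fun n => hC ⟨n, rfl⟩⟩
  obtain ⟨C, hC⟩ := banach_steinhaus hpointwise
  exact isBoundedUnder_of
    ⟨C, fun n => by simpa only [Function.comp_apply, innerSL_apply_norm] using hC n⟩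

theorem tendsto_inner (hf : TendstoWeakly f x) (hg : Tendsto g atTop (𝓝 x')) :
    Tendsto (fun n => ⟪f n, g n⟫) atTop (𝓝 ⟪x, x'⟫) := by
  have hsmall : Tendsto (fun n => ⟪g n - x', f n⟫) atTop (𝓝 0) :=
    (tendsto_sub_nhds_zero_iff.mpr hg).op_zero_isBoundedUnder_le hf.isBoundedUnder_norm _
      norm_inner_le_norm
  have hsplit : ∀ n, ⟪g n - x', f n⟫ + ⟪f n, x'⟫ = ⟪f n, g n⟫ := fun n => by
    rw [real_inner_comm, ← inner_add_right, sub_add_cancel]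
  simpa only [zero_add] using (hsmall.add (hf x')).congr hsplit

end TendstoWeakly

theorem sum_inner_eq_sum_inner_sub_add {ι : Type*} [Fintype ι] (a b : ι → X) (k : ι) :
    ∑ i, ⟪a i, b i⟫ = ∑ i, ⟪a i - a k, b i⟫ + ⟪a k, ∑ i, b i⟫ := by
  simp only [inner_sub_left, Finset.sum_sub_distrib, inner_sum, sub_add_cancel]

theorem tendsto_sum_inner_of_tendstoWeakly [CompleteSpace X] {ι : Type*} [Fintype ι]
    {a b : ι → ℕ → X} {α β : ι → X}
    (ha : ∀ i, TendstoWeakly (a i) (α i)) (hb : ∀ i, TendstoWeakly (b i) (β i))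
    (hab : ∀ i j, Tendsto (fun n => a i n - a j n) atTop (𝓝 (α i - α j)))
    (hsum : Tendsto (fun n => ∑ i, b i n) atTop (𝓝 (∑ i, β i))) :
    Tendsto (fun n => ∑ i, ⟪a i n, b i n⟫) atTop (𝓝 (∑ i, ⟪α i, β i⟫)) := by
  cases isEmpty_or_nonempty ι
  · simpa only [Finset.univ_eq_empty, Finset.sum_empty] using tendsto_const_nhds
  obtain ⟨k⟩ := ‹Nonempty ι›
  rw [sum_inner_eq_sum_inner_sub_add α β k]
  refine (Tendsto.add (tendsto_finsetSum _ fun i _ => ?_) ((ha k).tendsto_inner hsum)).congr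
    fun n => (sum_inner_eq_sum_inner_sub_add _ _ k).symm
  simpa only [real_inner_comm] using (hb i).tendsto_inner (hab i k)

theorem inner_add_sub_nonneg_of_norm_le {u v : X} (h : ‖v‖ ≤ ‖u‖) : 0 ≤ ⟪u + v, u - v⟫ := by
  have hexpand : ⟪u + v, u - v⟫ = ‖u‖ ^ 2 - ‖v‖ ^ 2 := by
    rw [inner_add_left, inner_sub_right, inner_sub_right, real_inner_comm v u,
      real_inner_self_eq_norm_sq, real_inner_self_eq_norm_sq]
    ring
  rw [hexpand, sub_nonneg]
  exact pow_le_pow_left₀ (norm_nonneg v) h 2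

theorem eq_zero_of_nonneg_sum_inner_neg_self {ι : Type*} [Fintype ι] {v : ι → X}
    (h : 0 ≤ ∑ i, ⟪v i, -v i⟫) (i : ι) : v i = 0 := by
  simp only [inner_neg_right, real_inner_self_eq_norm_sq, Finset.sum_neg_distrib,
    neg_nonneg] at h
  have hsq : ‖v i‖ ^ 2 = 0 :=
    (Finset.sum_eq_zero_iff_of_nonneg fun j _ => sq_nonneg _).mp
      (h.antisymm (Finset.sum_nonneg fun j _ => sq_nonneg _)) i (Finset.mem_univ i)
  rwa [sq_eq_zero_iff, norm_eq_zero] at hsq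

end

theorem multi_operator_demiclosedness_nonexpansive_general
    {X : Type*} [NormedAddCommGroup X] [InnerProductSpace ℝ X] [CompleteSpace X]
    (m : ℕ)
    (T : Fin m → X → X)
    (hT : ∀ i, ∀ a b : X, ‖T i a - T i b‖ ≤ ‖a - b‖)
    (zn : Fin m → ℕ → X) (z y : Fin m → X)
    (hzweak : ∀ i, ∀ w : X, Tendsto (fun n => ⟪zn i n, w⟫) atTop (𝓝 ⟪z i, w⟫))
    (hTweak : ∀ i, ∀ w : X, Tendsto (fun n => ⟪T i (zn i n), w⟫) atTop (𝓝 ⟪y i, w⟫))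
    (hsum : Tendsto (fun n => ∑ i, (zn i n - T i (zn i n))) atTop
      (𝓝 (∑ i, (z i - y i))))
    (hdiff : ∀ i j, Tendsto
      (fun n => zn i n - zn j n + T i (zn i n) - T j (zn j n)) atTop (𝓝 0)) :
    ∀ i, T i (z i) = y i := by
  have hz : ∀ i, TendstoWeakly (zn i) (z i) := hzweak
  have hTz : ∀ i, TendstoWeakly (fun n => T i (zn i n)) (y i) := hTweak
  have hzy : ∀ i j, z i + y i = z j + y j := fun i j =>
    ((hz i).add (hTz i)).eq_of_tendsto_sub ((hz j).add (hTz j))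
      ((hdiff i j).congr fun n => by abel)
  have hlim : Tendsto
      (fun n => ∑ i, ⟪(zn i n - z i) + (T i (zn i n) - T i (z i)),
        (zn i n - z i) - (T i (zn i n) - T i (z i))⟫) atTop
      (𝓝 (∑ i, ⟪y i - T i (z i), -(y i - T i (z i))⟫)) := by
    have hconst (x : X) : TendstoWeakly (fun _ => x) x := tendsto_const_nhds.tendstoWeakly
    refine tendsto_sum_inner_of_tendstoWeakly (fun i => ?_) (fun i => ?_) (fun i j => ?_) ?_
    · simpa only [sub_self, zero_add] using
        ((hz i).sub (hconst (z i))).add ((hTz i).sub (hconst (T i (z i))))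
    · simpa only [sub_self, zero_sub] using
        ((hz i).sub (hconst (z i))).sub ((hTz i).sub (hconst (T i (z i))))
    · have hlimit : 0 - (z i + T i (z i) - (z j + T j (z j))) =
          y i - T i (z i) - (y j - T j (z j)) := by
        linear_combination (norm := module) -(hzy i j)
      rw [← hlimit]
      exact ((hdiff i j).sub_const _).congr fun n => by abel
    · have h := hsum.sub_const (∑ i, (z i - T i (z i)))
      simp only [← Finset.sum_sub_distrib] at h
      convert h using 2 with n
      all_goals exact Finset.sum_congr rfl fun i _ => by abel
  have hnonneg : 0 ≤ ∑ i, ⟪y i - T i (z i), -(y i - T i (z i))⟫ := ge_of_tendsto' hlim fun n =>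
    Finset.sum_nonneg fun i _ => inner_add_sub_nonneg_of_norm_le (hT i _ _)
  exact fun i => (sub_eq_zero.mp (eq_zero_of_nonneg_sum_inner_neg_self hnonneg i)).symm

theorem multi_operator_demiclosedness_nonexpansive
    {X : Type*} [NormedAddCommGroup X] [InnerProductSpace ℝ X] [CompleteSpace X]
    (m : ℕ) (hm : 2 ≤ m)
    (T : Fin m → X → X)
    (hT : ∀ i, ∀ a b : X, ‖T i a - T i b‖ ≤ ‖a - b‖)
    (zn : Fin m → ℕ → X) (z y : Fin m → X)
    (hzweak : ∀ i, ∀ w : X, Tendsto (fun n => ⟪zn i n, w⟫) atTop (𝓝 ⟪z i, w⟫))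
    (hTweak : ∀ i, ∀ w : X, Tendsto (fun n => ⟪T i (zn i n), w⟫) atTop (𝓝 ⟪y i, w⟫))
    (hsum : Tendsto (fun n => ∑ i, (zn i n - T i (zn i n))) atTop
      (𝓝 (∑ i, (z i - y i))))
    (hdiff : ∀ i j, Tendsto
      (fun n => zn i n - zn j n + T i (zn i n) - T j (zn j n)) atTop (𝓝 0)) :
    ∀ i, T i (z i) = y i :=
  multi_operator_demiclosedness_nonexpansive_general m T hT zn z y hzweak hTweak hsum hdiff
end
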